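/- arXiv:2602.04859 — 3 statements merged into one kernel-verified Lean document; each statement's English description precedes it below -/
import Mathlib

section
/- Let n ≥ 1, m ∈ {1,…,n}, and let Ψ : {0,1}^n → ℂ define the vector |ψ⟩ = Σ_{z∈{0,1}^n} Ψ(z)|z⟩ in ℂ^{2^n}. Suppose that for every subset k ⊆ {1,…,n} with |k| = m and every z_k ∈ {0,1}^{n−m}, the quantity p(z_k) = Σ_{ℓ∈{0,1}^m} |Ψ(z_k^ℓ)|² is strictly positive. Then the operator L = C(n,m)^{−1} Σ_k Σ_{z_k} |z_k⟩⟨z_k| ⊗ L_{z_k} satisfies L|ψ⟩ = |ψ⟩. -/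
/-!
For fixed `k` and `z_k` the vector `v = |z_k⟩ ⊗ |Ψ_{z_k}⟩` satisfies `⟨v|ψ⟩ = √p(z_k)`, so the
projector `|v⟩⟨v|` sends `ψ` to `√p(z_k) v`, which is `ψ` cut down to the strings agreeing with
`z_k` outside `k`. Summing over `z_k` reassembles `ψ`, so each of the `C(n,m)` subsets `k`
contributes exactly `ψ`, and the normalisation cancels.
-/

open Matrix Finset

/-- The bitstring equal to `ℓ` on the qubits in `k` and to `z` on the qubits outside `k`. -/
def mergeString {n : ℕ} (k : Finset (Fin n)) (ℓ : {i // i ∈ k} → Bool)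
    (z : {i // i ∉ k} → Bool) : Fin n → Bool :=
  fun i => if h : i ∈ k then ℓ ⟨i, h⟩ else z ⟨i, h⟩

/-- `p(z_k) = Σ_{ℓ ∈ {0,1}^m} |Ψ(z_k^ℓ)|²`. -/
noncomputable def pProb {n : ℕ} (Ψ : (Fin n → Bool) → ℂ) (k : Finset (Fin n))
    (z : {i // i ∉ k} → Bool) : ℝ :=
  ∑ ℓ : {i // i ∈ k} → Bool, ‖Ψ (mergeString k ℓ z)‖ ^ 2

/-- The vector `|z_k⟩ ⊗ |Ψ_{z_k}⟩` embedded in `ℂ^{2^n}`: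
it equals `Ψ(w)/√(p(z_k))` on bitstrings `w` agreeing with `z_k` outside `k`, and `0` elsewhere. -/
noncomputable def psiVec {n : ℕ} (Ψ : (Fin n → Bool) → ℂ) (k : Finset (Fin n))
    (z : {i // i ∉ k} → Bool) : (Fin n → Bool) → ℂ :=
  fun w => if (fun i : {i // i ∉ k} => w i) = z then Ψ w / (Real.sqrt (pProb Ψ k z) : ℂ) else 0

/-- The operator `L = C(n,m)⁻¹ Σ_{k : |k| = m} Σ_{z_k} |z_k⟩⟨z_k| ⊗ L_{z_k}` where
`L_{z_k} = |Ψ_{z_k}⟩⟨Ψ_{z_k}|`. -/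
noncomputable def Lop (n m : ℕ) (Ψ : (Fin n → Bool) → ℂ) :
    Matrix (Fin n → Bool) (Fin n → Bool) ℂ :=
  ((n.choose m : ℂ))⁻¹ •
    ∑ k ∈ Finset.univ.powersetCard m,
      ∑ z : {i // i ∉ k} → Bool, Matrix.vecMulVec (psiVec Ψ k z) (star (psiVec Ψ k z))

section
variable {n : ℕ} (k : Finset (Fin n))

lemma restrict_mergeString (ℓ : {i // i ∈ k} → Bool) (z : {i // i ∉ k} → Bool) :
    (fun i : {i // i ∉ k} => mergeString k ℓ z i) = z := by
  funext i
  simp [mergeString, i.2]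

lemma sum_ite_restrict_eq {M : Type*} [AddCommMonoid M] (z : {i // i ∉ k} → Bool)
    (f : (Fin n → Bool) → M) :
    ∑ w, (if (fun i : {i // i ∉ k} => w i) = z then f w else 0)
      = ∑ ℓ : {i // i ∈ k} → Bool, f (mergeString k ℓ z) := by
  rw [← (Equiv.piEquivPiSubtypeProd (· ∈ k) fun _ => Bool).symm.sum_comp,
    Fintype.sum_prod_type]
  change ∑ ℓ, ∑ z', (if (fun i : {i // i ∉ k} => mergeString k ℓ z' i) = z
    then f (mergeString k ℓ z') else 0) = _
  simp only [restrict_mergeString, Finset.sum_ite_eq', Finset.mem_univ, if_true]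

variable (Ψ : (Fin n → Bool) → ℂ) (z : {i // i ∉ k} → Bool)

lemma star_psiVec_dotProduct (hp : 0 < pProb Ψ k z) :
    star (psiVec Ψ k z) ⬝ᵥ Ψ = (Real.sqrt (pProb Ψ k z) : ℂ) := by
  have hs : (Real.sqrt (pProb Ψ k z) : ℂ) ≠ 0 := by exact_mod_cast (Real.sqrt_pos.mpr hp).ne'
  have hsq : (Real.sqrt (pProb Ψ k z) : ℂ) ^ 2 = pProb Ψ k z := by
    exact_mod_cast Real.sq_sqrt hp.le
  have hterm : ∀ w, star (psiVec Ψ k z w) * Ψ w = if (fun i : {i // i ∉ k} => w i) = z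
      then ((‖Ψ w‖ ^ 2 : ℝ) : ℂ) / Real.sqrt (pProb Ψ k z) else 0 := by
    intro w
    unfold psiVec
    split_ifs
    · rw [star_div₀, Complex.star_def, Complex.conj_ofReal, div_mul_eq_mul_div,
        ← Complex.normSq_eq_conj_mul_self, Complex.normSq_eq_norm_sq]
    · simp
  simp only [dotProduct, Pi.star_apply, hterm, sum_ite_restrict_eq, ← Finset.sum_div]
  rw [← Complex.ofReal_sum, ← pProb, ← hsq, pow_two, mul_div_cancel_right₀ _ hs]

lemma vecMulVec_psiVec_mulVec (hp : 0 < pProb Ψ k z) :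
    vecMulVec (psiVec Ψ k z) (star (psiVec Ψ k z)) *ᵥ Ψ
      = fun w => if (fun i : {i // i ∉ k} => w i) = z then Ψ w else 0 := by
  have hs : (Real.sqrt (pProb Ψ k z) : ℂ) ≠ 0 := by exact_mod_cast (Real.sqrt_pos.mpr hp).ne'
  funext w
  rw [vecMulVec_mulVec, star_psiVec_dotProduct k Ψ z hp]
  simp only [MulOpposite.smul_eq_mul_unop, MulOpposite.unop_op, Pi.smul_apply]
  unfold psiVec
  split_ifs
  · field_simp
  · simp

end

lemma sum_vecMulVec_psiVec_mulVec {n : ℕ} (k : Finset (Fin n)) (Ψ : (Fin n → Bool) → ℂ)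
    (hp : ∀ z : {i // i ∉ k} → Bool, 0 < pProb Ψ k z) :
    (∑ z : {i // i ∉ k} → Bool, vecMulVec (psiVec Ψ k z) (star (psiVec Ψ k z))) *ᵥ Ψ = Ψ := by
  funext w
  simp only [sum_mulVec, vecMulVec_psiVec_mulVec k Ψ _ (hp _), Finset.sum_apply,
    Finset.sum_ite_eq, Finset.mem_univ, if_true]

theorem Lop_fixes_psi_general (n m : ℕ) (hmn : m ≤ n)
    (Ψ : (Fin n → Bool) → ℂ)
    (hp : ∀ k ∈ Finset.univ.powersetCard m, ∀ z : {i // i ∉ k} → Bool, 0 < pProb Ψ k z) :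
    (Lop n m Ψ) *ᵥ Ψ = Ψ := by
  have hchoose : (n.choose m : ℂ) ≠ 0 := Nat.cast_ne_zero.mpr (Nat.choose_pos hmn).ne'
  have hsum : ∑ k ∈ Finset.univ.powersetCard m,
      (∑ z : {i // i ∉ k} → Bool, vecMulVec (psiVec Ψ k z) (star (psiVec Ψ k z))) *ᵥ Ψ
        = (n.choose m : ℂ) • Ψ := by
    rw [Finset.sum_congr rfl fun k hk => sum_vecMulVec_psiVec_mulVec k Ψ (hp k hk),
      Finset.sum_const, Finset.card_powersetCard, Finset.card_univ, Fintype.card_fin,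
      Nat.cast_smul_eq_nsmul]
  rw [Lop, smul_mulVec, sum_mulVec, hsum, smul_smul, inv_mul_cancel₀ hchoose, one_smul]

/-- If `p(z_k) > 0` for all `k` of size `m` and all `z_k`, then `L|ψ⟩ = |ψ⟩`. -/
theorem Lop_fixes_psi (n m : ℕ) (hn : 1 ≤ n) (hm : 1 ≤ m) (hmn : m ≤ n)
    (Ψ : (Fin n → Bool) → ℂ)
    (hp : ∀ k ∈ Finset.univ.powersetCard m, ∀ z : {i // i ∉ k} → Bool, 0 < pProb Ψ k z) :
    (Lop n m Ψ) *ᵥ Ψ = Ψ :=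
  Lop_fixes_psi_general n m hmn Ψ hp
end

section
/- Let L be a Hermitian operator on ℂ^d with 0 ⪯ L ⪯ I, let ψ ∈ ℂ^d be a unit vector with Lψ = ψ, and let τ ≥ 1 be such that ⟨φ|L|φ⟩ ≤ 1 − 1/τ for every unit vector φ orthogonal to ψ (i.e., the spectral gap of L at its top eigenvalue 1, restricted to the orthogonal complement of ψ, is at least 1/τ). Let ρ be any density matrix on ℂ^d (positive semidefinite with trace 1) and let ε ≥ 0. Then: (i) if tr(Lρ) ≥ 1 − ε, then ⟨ψ|ρ|ψ⟩ ≥ 1 − τε; and (ii) if ⟨ψ|ρ|ψ⟩ ≥ 1 − ε, then tr(Lρ) ≥ 1 − ε. -/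
/-!
Let `P = ψψ*` and `Q = 1 - P`. Since `ψ` is a unit eigenvector of the Hermitian `L` for the
eigenvalue `1`, `Q L Q = L - P`, so the Loewner inequalities `P ≤ L` and `1 - P ≤ τ (1 - L)` only
have to be checked on `ψ⊥`: the first because `L ≥ 0`, the second by the spectral gap.
Pairing them with `ρ ≥ 0` through the trace gives `⟨ψ|ρ|ψ⟩ ≤ tr(Lρ)` and
`1 - ⟨ψ|ρ|ψ⟩ ≤ τ (1 - tr(Lρ))`, which are (ii) and (i).
-/

open Matrix
open scoped ComplexOrder MatrixOrder

namespace Matrix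

variable {n 𝕜 : Type*} [Fintype n] [RCLike 𝕜]

lemma star_dotProduct_self_eq_sum_norm_sq (v : n → 𝕜) :
    star v ⬝ᵥ v = ((∑ i, ‖v i‖ ^ 2 : ℝ) : 𝕜) := by
  simp [dotProduct, RCLike.conj_mul]

lemma PosSemidef.trace_mul_nonneg {A B : Matrix n n 𝕜} (hA : A.PosSemidef) (hB : B.PosSemidef) :
    0 ≤ (A * B).trace := by
  classical
  obtain ⟨Y, rfl⟩ := CStarAlgebra.nonneg_iff_eq_star_mul_self.mp hB.nonneg
  rw [star_eq_conjTranspose, ← Matrix.mul_assoc, trace_mul_comm, ← Matrix.mul_assoc]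
  exact (hA.mul_mul_conjTranspose_same Y).trace_nonneg

lemma trace_mul_le_trace_mul_of_le {A B ρ : Matrix n n 𝕜} (hAB : A ≤ B) (hρ : ρ.PosSemidef) :
    (A * ρ).trace ≤ (B * ρ).trace := by
  rw [← sub_nonneg, ← trace_sub, ← sub_mul]
  exact PosSemidef.trace_mul_nonneg hAB hρ

lemma IsHermitian.posSemidef_of_re_dotProduct_mulVec_nonneg {M : Matrix n n 𝕜}
    (hM : M.IsHermitian) (h : ∀ x, 0 ≤ RCLike.re (star x ⬝ᵥ (M *ᵥ x))) : M.PosSemidef :=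
  .of_dotProduct_mulVec_nonneg hM fun x ↦
    RCLike.nonneg_iff.mpr ⟨h x, hM.im_star_dotProduct_mulVec_self x⟩

lemma star_dotProduct_mulVec_smul_self (M : Matrix n n 𝕜) (c : ℝ) (v : n → 𝕜) :
    star ((c : 𝕜) • v) ⬝ᵥ (M *ᵥ ((c : 𝕜) • v)) = ((c ^ 2 : ℝ) : 𝕜) * (star v ⬝ᵥ (M *ᵥ v)) := by
  simp only [mulVec_smul, star_smul, RCLike.star_def, RCLike.conj_ofReal, smul_dotProduct,
    dotProduct_smul, smul_eq_mul]
  push_cast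
  ring

lemma re_dotProduct_mulVec_le_of_forall_sum_norm_sq_eq_one {M : Matrix n n 𝕜} {ψ : n → 𝕜}
    {c : ℝ} (h : ∀ φ : n → 𝕜, ∑ i, ‖φ i‖ ^ 2 = 1 → star ψ ⬝ᵥ φ = 0 →
      RCLike.re (star φ ⬝ᵥ (M *ᵥ φ)) ≤ c)
    {w : n → 𝕜} (hw : star ψ ⬝ᵥ w = 0) :
    RCLike.re (star w ⬝ᵥ (M *ᵥ w)) ≤ c * ∑ i, ‖w i‖ ^ 2 := by
  set r := ∑ i, ‖w i‖ ^ 2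
  obtain hr | hr := (show 0 ≤ r by positivity).eq_or_lt
  · have hw0 : w = 0 := by
      rw [← dotProduct_star_self_eq_zero, star_dotProduct_self_eq_sum_norm_sq]
      exact_mod_cast hr.symm
    simp [hw0, ← hr]
  set φ := (((√r)⁻¹ : ℝ) : 𝕜) • w
  have hφ : ∑ i, ‖φ i‖ ^ 2 = 1 := by
    simp only [φ, Pi.smul_apply, norm_smul, mul_pow, ← Finset.mul_sum, RCLike.norm_ofReal]
    rw [abs_of_pos (by positivity), inv_pow, Real.sq_sqrt hr.le, inv_mul_cancel₀ hr.ne']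
  have hMφ := h φ hφ (by simp [φ, hw])
  rw [star_dotProduct_mulVec_smul_self, RCLike.re_ofReal_mul, inv_pow, Real.sq_sqrt hr.le] at hMφ
  rwa [inv_mul_le_iff₀ hr, mul_comm] at hMφ

lemma conjTranspose_mul_mul_of_mulVec_eq_self [DecidableEq n] {M : Matrix n n 𝕜} {ψ : n → 𝕜}
    (hM : M.IsHermitian) (hψ : star ψ ⬝ᵥ ψ = 1) (hMψ : M *ᵥ ψ = ψ) :
    (1 - vecMulVec ψ (star ψ))ᴴ * M * (1 - vecMulVec ψ (star ψ)) = M - vecMulVec ψ (star ψ) := by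
  have hPP : vecMulVec ψ (star ψ) * vecMulVec ψ (star ψ) = vecMulVec ψ (star ψ) := by
    rw [vecMulVec_mul_vecMulVec, hψ, one_smul]
  have hMP : M * vecMulVec ψ (star ψ) = vecMulVec ψ (star ψ) := by
    rw [mul_vecMulVec, hMψ]
  have hPM : vecMulVec ψ (star ψ) * M = vecMulVec ψ (star ψ) := by
    rw [vecMulVec_mul, ← hM.eq, ← star_mulVec, hMψ]
  rw [conjTranspose_sub, conjTranspose_one, conjTranspose_vecMulVec, star_star]
  simp only [sub_mul, mul_sub, Matrix.one_mul, Matrix.mul_one, hMP, hPM, hPP, sub_self, sub_zero]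

lemma vecMulVec_star_le_of_mulVec_eq_self {M : Matrix n n 𝕜} {ψ : n → 𝕜}
    (hM : M.PosSemidef) (hψ : star ψ ⬝ᵥ ψ = 1) (hMψ : M *ᵥ ψ = ψ) :
    vecMulVec ψ (star ψ) ≤ M := by
  classical
  rw [le_iff, ← conjTranspose_mul_mul_of_mulVec_eq_self hM.isHermitian hψ hMψ]
  exact hM.conjTranspose_mul_mul_same _

lemma one_sub_vecMulVec_star_le_smul_one_sub [DecidableEq n] {M : Matrix n n 𝕜} {ψ : n → 𝕜}
    {τ : ℝ} (hM : M.IsHermitian) (hψ : star ψ ⬝ᵥ ψ = 1) (hMψ : M *ᵥ ψ = ψ) (hτ : 0 < τ)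
    (hgap : ∀ w : n → 𝕜, star ψ ⬝ᵥ w = 0 →
      RCLike.re (star w ⬝ᵥ (M *ᵥ w)) ≤ (1 - 1 / τ) * ∑ i, ‖w i‖ ^ 2) :
    1 - vecMulVec ψ (star ψ) ≤ τ • (1 - M) := by
  have hQQ := conjTranspose_mul_mul_of_mulVec_eq_self isHermitian_one hψ (one_mulVec ψ)
  have hQMQ := conjTranspose_mul_mul_of_mulVec_eq_self hM hψ hMψ
  set Q := 1 - vecMulVec ψ (star ψ)
  set K := τ • (1 - M) - 1
  have hQK : τ • (1 - M) - Q = Qᴴ * K * Q := by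
    have : Qᴴ * K * Q = τ • (Qᴴ * 1 * Q - Qᴴ * M * Q) - Qᴴ * 1 * Q := by
      simp only [K, sub_mul, mul_sub, Matrix.mul_smul, Matrix.smul_mul]
    rw [this, hQQ, hQMQ]
    simp only [Q]
    rw [sub_sub_sub_cancel_right]
  have hK : K.IsHermitian :=
    ((isHermitian_one.sub hM).smul (IsSelfAdjoint.all τ)).sub isHermitian_one
  rw [le_iff, hQK]
  refine (isHermitian_conjTranspose_mul_mul Q hK).posSemidef_of_re_dotProduct_mulVec_nonneg
    fun x ↦ ?_
  rw [← mulVec_mulVec, ← mulVec_mulVec, dotProduct_mulVec, ← star_mulVec]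
  have hw : star ψ ⬝ᵥ (Q *ᵥ x) = 0 := by
    rw [dotProduct_mulVec, vecMul_sub, vecMul_one, vecMul_vecMulVec, hψ, one_smul, sub_self,
      zero_dotProduct]
  have hgap_Qx := mul_le_mul_of_nonneg_left (hgap _ hw) hτ.le
  simp only [K, sub_mulVec, smul_mulVec, one_mulVec, dotProduct_sub, dotProduct_smul,
    star_dotProduct_self_eq_sum_norm_sq, map_sub, RCLike.smul_re, RCLike.ofReal_re]
  set r := ∑ i, ‖(Q *ᵥ x) i‖ ^ 2
  have hτr : τ * ((1 - 1 / τ) * r) = τ * r - r := by field_simp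
  linarith

lemma trace_vecMulVec_mul (u v : n → 𝕜) (A : Matrix n n 𝕜) :
    (vecMulVec u v * A).trace = v ⬝ᵥ (A *ᵥ u) := by
  rw [vecMulVec_mul, trace_vecMulVec, dotProduct_comm, dotProduct_mulVec]

end Matrix

theorem shadow_overlap_vs_fidelity_general {d : ℕ} (L ρ : Matrix (Fin d) (Fin d) ℂ)
    (hL0 : L.PosSemidef)
    (ψ : Fin d → ℂ) (hψ : ∑ i, ‖ψ i‖ ^ 2 = 1) (hLψ : L *ᵥ ψ = ψ)
    (τ : ℝ) (hτ : 1 ≤ τ)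
    (hgap : ∀ φ : Fin d → ℂ, (∑ i, ‖φ i‖ ^ 2 = 1) → (star ψ ⬝ᵥ φ = 0) →
      (star φ ⬝ᵥ (L *ᵥ φ)).re ≤ 1 - 1 / τ)
    (hρ : ρ.PosSemidef) (hρtr : ρ.trace = 1)
    (ε : ℝ) :
    (((L * ρ).trace).re ≥ 1 - ε → (star ψ ⬝ᵥ (ρ *ᵥ ψ)).re ≥ 1 - τ * ε) ∧
    ((star ψ ⬝ᵥ (ρ *ᵥ ψ)).re ≥ 1 - ε → ((L * ρ).trace).re ≥ 1 - ε) := by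
  have hψ1 : star ψ ⬝ᵥ ψ = 1 := by
    rw [star_dotProduct_self_eq_sum_norm_sq, hψ, RCLike.ofReal_one]
  have hτ0 : 0 < τ := by linarith
  have hfid := trace_mul_le_trace_mul_of_le (vecMulVec_star_le_of_mulVec_eq_self hL0 hψ1 hLψ) hρ
  have hinfid := trace_mul_le_trace_mul_of_le
    (one_sub_vecMulVec_star_le_smul_one_sub hL0.isHermitian hψ1 hLψ hτ0
      fun w hw ↦ re_dotProduct_mulVec_le_of_forall_sum_norm_sq_eq_one hgap hw) hρ
  rw [trace_vecMulVec_mul] at hfid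
  simp only [Matrix.smul_mul, sub_mul, Matrix.one_mul, trace_sub, trace_smul, trace_vecMulVec_mul,
    hρtr] at hinfid
  replace hfid := (Complex.le_def.1 hfid).1
  replace hinfid := (Complex.le_def.1 hinfid).1
  simp only [Complex.sub_re, Complex.one_re, Complex.real_smul, Complex.re_ofReal_mul] at hinfid
  refine ⟨fun hS ↦ ?_, fun hF ↦ by linarith⟩
  have := mul_le_mul_of_nonneg_left (show 1 - ((L * ρ).trace).re ≤ ε by linarith) hτ0.le
  linarith

/-- If `L` is Hermitian with `0 ⪯ L ⪯ I`, `ψ` is a unit eigenvector of `L` with eigenvalue `1`,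
the quadratic form of `L` is at most `1 - 1/τ` on unit vectors orthogonal to `ψ`, and `ρ` is a
density matrix, then: (i) `tr(Lρ) ≥ 1 - ε` implies `⟨ψ|ρ|ψ⟩ ≥ 1 - τε`, and
(ii) `⟨ψ|ρ|ψ⟩ ≥ 1 - ε` implies `tr(Lρ) ≥ 1 - ε`. -/
theorem shadow_overlap_vs_fidelity {d : ℕ} (L ρ : Matrix (Fin d) (Fin d) ℂ)
    (hL : L.IsHermitian) (hL0 : L.PosSemidef) (hL1 : ((1 : Matrix (Fin d) (Fin d) ℂ) - L).PosSemidef)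
    (ψ : Fin d → ℂ) (hψ : ∑ i, ‖ψ i‖ ^ 2 = 1) (hLψ : L *ᵥ ψ = ψ)
    (τ : ℝ) (hτ : 1 ≤ τ)
    (hgap : ∀ φ : Fin d → ℂ, (∑ i, ‖φ i‖ ^ 2 = 1) → (star ψ ⬝ᵥ φ = 0) →
      (star φ ⬝ᵥ (L *ᵥ φ)).re ≤ 1 - 1 / τ)
    (hρ : ρ.PosSemidef) (hρtr : ρ.trace = 1)
    (ε : ℝ) (hε : 0 ≤ ε) :
    (((L * ρ).trace).re ≥ 1 - ε → (star ψ ⬝ᵥ (ρ *ᵥ ψ)).re ≥ 1 - τ * ε) ∧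
    ((star ψ ⬝ᵥ (ρ *ᵥ ψ)).re ≥ 1 - ε → ((L * ρ).trace).re ≥ 1 - ε) :=
  shadow_overlap_vs_fidelity_general L ρ hL0 ψ hψ hLψ τ hτ hgap hρ hρtr ε
end

section
/- Let S be the set of six unit vectors in ℂ² consisting of the eigenvectors of the three Pauli matrices: (1/√2)(1,1), (1/√2)(1,−1), (1/√2)(1,i), (1/√2)(1,−i), (1,0), and (0,1). Then for every complex 2×2 matrix ρ: (1/3)·Σ_{s∈S} ⟨s|ρ|s⟩·(3|s⟩⟨s| − I) = ρ. -/
/-!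
The two eigenvectors of a Pauli matrix `σ` have projectors `(1 ± σ) / 2`, so together they
contribute `(tr ρ • 1 + tr (ρ σ) • σ) / 2` to `∑ₛ ⟨s|ρ|s⟩ |s⟩⟨s|`. Summing over `X, Y, Z` and
using the Pauli expansion `tr ρ • 1 + ∑ tr (ρ σ) • σ = 2 ρ` gives
`∑ₛ ⟨s|ρ|s⟩ |s⟩⟨s| = ρ + tr ρ • 1`, while `∑ₛ ⟨s|ρ|s⟩ = 3 tr ρ`; the `-I` terms of the shadow
cancel exactly the trace part.
-/

open Matrix

/-- The six Pauli eigenvectors in `ℂ²`: `(1/√2)(1,1)`, `(1/√2)(1,−1)`, `(1/√2)(1,i)`,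
`(1/√2)(1,−i)`, `(1,0)`, `(0,1)`. -/
noncomputable def pauliEig : Fin 6 → Fin 2 → ℂ :=
  ![![((Real.sqrt 2 : ℂ))⁻¹, ((Real.sqrt 2 : ℂ))⁻¹],
    ![((Real.sqrt 2 : ℂ))⁻¹, -((Real.sqrt 2 : ℂ))⁻¹],
    ![((Real.sqrt 2 : ℂ))⁻¹, ((Real.sqrt 2 : ℂ))⁻¹ * Complex.I],
    ![((Real.sqrt 2 : ℂ))⁻¹, -(((Real.sqrt 2 : ℂ))⁻¹ * Complex.I)],
    ![1, 0],
    ![0, 1]]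

section

variable {n R : Type*} [Fintype n] [CommRing R]

theorem Matrix.trace_mul_vecMulVec (ρ : Matrix n n R) (v w : n → R) :
    trace (ρ * vecMulVec v w) = w ⬝ᵥ (ρ *ᵥ v) := by
  rw [mul_vecMulVec, trace_vecMulVec, dotProduct_comm]

variable [DecidableEq n]

theorem Matrix.trace_mul_smul_one_add_add_trace_mul_smul_one_sub (ρ σ : Matrix n n R) (c : R) :
    trace (ρ * c • (1 + σ)) + trace (ρ * c • (1 - σ)) = 2 * c * trace ρ := by
  simp only [Matrix.mul_smul, mul_add, mul_sub, mul_one, trace_smul, trace_add, trace_sub,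
    smul_eq_mul]
  ring

theorem Matrix.trace_mul_smul_one_add_smul_add_trace_mul_smul_one_sub_smul
    (ρ σ : Matrix n n R) (c : R) :
    trace (ρ * c • (1 + σ)) • c • (1 + σ) + trace (ρ * c • (1 - σ)) • c • (1 - σ) =
      (2 * c ^ 2) • (trace ρ • 1 + trace (ρ * σ) • σ) := by
  simp only [Matrix.mul_smul, mul_add, mul_sub, mul_one, trace_smul, trace_add, trace_sub,
    smul_eq_mul]
  module

end

theorem one_div_smul_sum_smul_smul_sub_one_eq_of_frame {ι n K : Type*} [Fintype ι] [Fintype n]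
    [DecidableEq n] [Field K] (w : ι → K) (P : ι → Matrix n n K) (ρ : Matrix n n K) {a t : K}
    (ha : a ≠ 0) (hframe : ∑ j, w j • P j = ρ + t • 1) (htotal : ∑ j, w j = a * t) :
    (1 / a) • ∑ j, w j • (a • P j - 1) = ρ := by
  simp only [smul_sub, Finset.sum_sub_distrib, smul_comm (w _) a, ← Finset.smul_sum, hframe,
    ← Finset.sum_smul, htotal]
  rw [mul_smul, smul_smul, one_div, inv_mul_cancel₀ ha, one_smul, inv_smul_smul₀ ha,
    add_sub_cancel_right]

def pauliX : Matrix (Fin 2) (Fin 2) ℂ := !![0, 1; 1, 0]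

def pauliY : Matrix (Fin 2) (Fin 2) ℂ := !![0, -Complex.I; Complex.I, 0]

def pauliZ : Matrix (Fin 2) (Fin 2) ℂ := !![1, 0; 0, -1]

theorem trace_smul_one_add_trace_mul_pauli_smul (ρ : Matrix (Fin 2) (Fin 2) ℂ) :
    trace ρ • 1 + trace (ρ * pauliX) • pauliX + trace (ρ * pauliY) • pauliY +
      trace (ρ * pauliZ) • pauliZ = (2 : ℂ) • ρ := by
  ext i j
  fin_cases i <;> fin_cases j <;>
    simp [pauliX, pauliY, pauliZ, trace, Fin.sum_univ_two, mul_apply] <;> grind [Complex.I_mul_I]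

theorem vecMulVec_pauliEig_star :
    (fun j => vecMulVec (pauliEig j) (star (pauliEig j))) =
      ![(2⁻¹ : ℂ) • (1 + pauliX), (2⁻¹ : ℂ) • (1 - pauliX), (2⁻¹ : ℂ) • (1 + pauliY),
        (2⁻¹ : ℂ) • (1 - pauliY), (2⁻¹ : ℂ) • (1 + pauliZ), (2⁻¹ : ℂ) • (1 - pauliZ)] := by
  have hsq : ((Real.sqrt 2 : ℂ))⁻¹ ^ 2 = 2⁻¹ := by
    rw [inv_pow, ← Complex.ofReal_pow, Real.sq_sqrt zero_le_two]; norm_num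
  have hconj : star ((Real.sqrt 2 : ℂ))⁻¹ = ((Real.sqrt 2 : ℂ))⁻¹ := by
    rw [star_inv₀, Complex.star_def, Complex.conj_ofReal]
  funext k
  ext i j
  fin_cases k <;> fin_cases i <;> fin_cases j <;>
    simp [pauliEig, pauliX, pauliY, pauliZ, vecMulVec_apply, hconj] <;>
    grind [Complex.I_mul_I]

theorem sum_trace_mul_vecMulVec_pauliEig_smul (ρ : Matrix (Fin 2) (Fin 2) ℂ) :
    ∑ j, trace (ρ * vecMulVec (pauliEig j) (star (pauliEig j))) •
        vecMulVec (pauliEig j) (star (pauliEig j)) = ρ + trace ρ • 1 := by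
  simp only [congrFun vecMulVec_pauliEig_star, Fin.sum_univ_six, Matrix.cons_val]
  have hX := trace_mul_smul_one_add_smul_add_trace_mul_smul_one_sub_smul ρ pauliX 2⁻¹
  have hY := trace_mul_smul_one_add_smul_add_trace_mul_smul_one_sub_smul ρ pauliY 2⁻¹
  have hZ := trace_mul_smul_one_add_smul_add_trace_mul_smul_one_sub_smul ρ pauliZ 2⁻¹
  linear_combination (norm := module)
    hX + hY + hZ + (2⁻¹ : ℂ) • trace_smul_one_add_trace_mul_pauli_smul ρ

theorem sum_trace_mul_vecMulVec_pauliEig (ρ : Matrix (Fin 2) (Fin 2) ℂ) :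
    ∑ j, trace (ρ * vecMulVec (pauliEig j) (star (pauliEig j))) = 3 * trace ρ := by
  simp only [congrFun vecMulVec_pauliEig_star, Fin.sum_univ_six, Matrix.cons_val]
  have hX := trace_mul_smul_one_add_add_trace_mul_smul_one_sub ρ pauliX 2⁻¹
  have hY := trace_mul_smul_one_add_add_trace_mul_smul_one_sub ρ pauliY 2⁻¹
  have hZ := trace_mul_smul_one_add_add_trace_mul_smul_one_sub ρ pauliZ 2⁻¹
  linear_combination hX + hY + hZ

/-- The single-qubit random Pauli classical shadow is unbiased:
`(1/3)·Σ_{s ∈ S} ⟨s|ρ|s⟩·(3|s⟩⟨s| − I) = ρ` for every `2×2` matrix `ρ`, where `S` is the set of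
the six Pauli eigenvectors. -/
theorem pauli_shadow_unbiased (ρ : Matrix (Fin 2) (Fin 2) ℂ) :
    (1 / 3 : ℂ) • ∑ j : Fin 6,
        (star (pauliEig j) ⬝ᵥ (ρ *ᵥ pauliEig j)) •
          ((3 : ℂ) • Matrix.vecMulVec (pauliEig j) (star (pauliEig j)) - 1) = ρ := by
  simp only [← trace_mul_vecMulVec]
  exact one_div_smul_sum_smul_smul_sub_one_eq_of_frame _ _ ρ three_ne_zero
    (sum_trace_mul_vecMulVec_pauliEig_smul ρ) (sum_trace_mul_vecMulVec_pauliEig ρ)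
end
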